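/- arXiv:2003.09707 — 5 statements merged into one kernel-verified Lean document; each statement's English description precedes it below -/
import Mathlib

section
/- If the gradient map of a convex differentiable function φ: ℝ^m → ℝ satisfies a Lipschitz condition with constant 1/γ, then the gradient map is co-coercive with constant γ: for all u, v ∈ ℝ^m, ⟨u - v, ∇φ(u) - ∇φ(v)⟩ ≥ γ‖∇φ(u) - ∇φ(v)‖². -/
open scoped InnerProductSpace RealInnerProductSpace NNReal Gradient

/-!
Along a line, convexity gives the affine minorant `f v + ⟪∇f v, z - v⟫ ≤ f z`, and an
`L`-Lipschitz gradient gives the quadratic majorant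
`f z ≤ f u + ⟪∇f u, z - u⟫ + L / 2 * ‖z - u‖ ^ 2`. Evaluating both at the gradient step
`z = u - L⁻¹ • (∇f u - ∇f v)` yields
`f v + ⟪∇f v, u - v⟫ + (2 L)⁻¹ * ‖∇f u - ∇f v‖ ^ 2 ≤ f u`,
and adding this to the same inequality with `u` and `v` exchanged gives co-coercivity.
-/

variable {E : Type*} [NormedAddCommGroup E] [InnerProductSpace ℝ E] [CompleteSpace E]
  {f : E → ℝ}

theorem hasDerivAt_comp_add_smul (x d : E) (t : ℝ) (hf : DifferentiableAt ℝ f (x + t • d)) :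
    HasDerivAt (fun s : ℝ => f (x + s • d)) ⟪∇ f (x + t • d), d⟫ t := by
  have hline : HasDerivAt (fun s : ℝ => x + s • d) d t := by
    simpa using ((hasDerivAt_id t).smul_const d).const_add x
  exact hf.hasGradientAt.hasFDerivAt.comp_hasDerivAt t hline

theorem ConvexOn.add_inner_gradient_le (hconv : ConvexOn ℝ Set.univ f)
    {x : E} (hf : DifferentiableAt ℝ f x) (y : E) :
    f x + ⟪∇ f x, y - x⟫ ≤ f y := by
  have hline : ConvexOn ℝ Set.univ (fun t : ℝ => f (x + t • (y - x))) := by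
    simpa [Function.comp_def, AffineMap.lineMap_apply, add_comm] using
      hconv.comp_affineMap (AffineMap.lineMap x y)
  have hderiv := hasDerivAt_comp_add_smul x (y - x) 0 (by simpa using hf)
  have hslope := hline.le_slope_of_hasDerivAt (Set.mem_univ 0) (Set.mem_univ 1) zero_lt_one hderiv
  simp only [slope_def_field, zero_smul, add_zero, one_smul, add_sub_cancel, sub_zero,
    div_one] at hslope
  linarith

theorem le_add_inner_gradient_add_sq_norm_of_lipschitzWith {L : ℝ≥0} (hf : Differentiable ℝ f)
    (hlip : LipschitzWith L (∇ f)) (x y : E) :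
    f y ≤ f x + ⟪∇ f x, y - x⟫ + L / 2 * ‖y - x‖ ^ 2 := by
  set d := y - x
  have hderiv (t : ℝ) := hasDerivAt_comp_add_smul x d t (hf _)
  have hbound (t : ℝ) : HasDerivAt (fun t : ℝ => f x + t * ⟪∇ f x, d⟫ + L / 2 * t ^ 2 * ‖d‖ ^ 2)
      (⟪∇ f x, d⟫ + L * t * ‖d‖ ^ 2) t := by
    have := (((hasDerivAt_id t).mul_const ⟪∇ f x, d⟫).const_add (f x)).add
      (((hasDerivAt_pow 2 t).const_mul (L / 2 : ℝ)).mul_const (‖d‖ ^ 2))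
    exact this.congr_deriv (by push_cast; ring)
  have hslope (t : ℝ) (ht : 0 ≤ t) :
      ⟪∇ f (x + t • d), d⟫ ≤ ⟪∇ f x, d⟫ + L * t * ‖d‖ ^ 2 := by
    have hgrad : ‖∇ f (x + t • d) - ∇ f x‖ ≤ L * (t * ‖d‖) := by
      simpa [norm_smul, abs_of_nonneg ht] using
        lipschitzWith_iff_norm_sub_le.1 hlip (x + t • d) x
    calc ⟪∇ f (x + t • d), d⟫ = ⟪∇ f x, d⟫ + ⟪∇ f (x + t • d) - ∇ f x, d⟫ := by
          rw [inner_sub_left]; ring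
      _ ≤ ⟪∇ f x, d⟫ + ‖∇ f (x + t • d) - ∇ f x‖ * ‖d‖ := by gcongr; exact real_inner_le_norm _ _
      _ ≤ ⟪∇ f x, d⟫ + L * (t * ‖d‖) * ‖d‖ := by gcongr
      _ = ⟪∇ f x, d⟫ + L * t * ‖d‖ ^ 2 := by ring
  have hend := image_le_of_deriv_right_le_deriv_boundary (a := 0) (b := 1)
    (fun t _ => (hderiv t).continuousAt.continuousWithinAt)
    (fun t _ => (hderiv t).hasDerivWithinAt) (by simp)
    (fun t _ => (hbound t).continuousAt.continuousWithinAt)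
    (fun t _ => (hbound t).hasDerivWithinAt) (fun t ht => hslope t ht.1)
    (Set.right_mem_Icc.2 zero_le_one)
  simpa [d] using hend

theorem ConvexOn.add_inner_gradient_add_sq_norm_le {L : ℝ≥0} (hconv : ConvexOn ℝ Set.univ f)
    (hf : Differentiable ℝ f) (hlip : LipschitzWith L (∇ f)) (u v : E) :
    f v + ⟪∇ f v, u - v⟫ + (2 * (L : ℝ))⁻¹ * ‖∇ f u - ∇ f v‖ ^ 2 ≤ f u := by
  set g := ∇ f u - ∇ f v
  set z := u - (L : ℝ)⁻¹ • g
  have hlower := hconv.add_inner_gradient_le (hf v) z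
  have hupper := le_add_inner_gradient_add_sq_norm_of_lipschitzWith hf hlip u z
  have hzu : z - u = -((L : ℝ)⁻¹ • g) := by simp [z]
  have hzv : z - v = (u - v) - (L : ℝ)⁻¹ • g := by simp [z]; abel
  rw [hzv, inner_sub_right, real_inner_smul_right] at hlower
  rw [hzu, inner_neg_right, real_inner_smul_right, norm_neg, norm_smul, mul_pow,
    Real.norm_eq_abs, sq_abs] at hupper
  have hg : ⟪∇ f u, g⟫ - ⟪∇ f v, g⟫ = ‖g‖ ^ 2 := by
    rw [← inner_sub_left, real_inner_self_eq_norm_sq]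
  -- holds also for `L = 0`, where `L⁻¹ = 0`; hence no case split
  have hL : (L : ℝ) * (L : ℝ)⁻¹ ^ 2 = (L : ℝ)⁻¹ := by
    simpa [sq, mul_comm, mul_left_comm] using mul_self_mul_inv (L : ℝ)⁻¹
  linear_combination hlower + hupper - (L : ℝ)⁻¹ * hg + ‖g‖ ^ 2 / 2 * hL

theorem ConvexOn.inv_mul_sq_norm_gradient_sub_le_inner {L : ℝ≥0}
    (hconv : ConvexOn ℝ Set.univ f) (hf : Differentiable ℝ f) (hlip : LipschitzWith L (∇ f))
    (u v : E) :
    (L : ℝ)⁻¹ * ‖∇ f u - ∇ f v‖ ^ 2 ≤ ⟪u - v, ∇ f u - ∇ f v⟫ := by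
  have huv := hconv.add_inner_gradient_add_sq_norm_le hf hlip u v
  have hvu := hconv.add_inner_gradient_add_sq_norm_le hf hlip v u
  rw [norm_sub_rev] at hvu
  have hinner : ⟪u - v, ∇ f u - ∇ f v⟫ = -(⟪∇ f v, u - v⟫ + ⟪∇ f u, v - u⟫) := by
    simp only [inner_sub_left, inner_sub_right, real_inner_comm u, real_inner_comm v]; ring
  rw [hinner]
  rw [mul_inv] at huv hvu
  linarith

/-- if the gradient map of a convex differentiable `φ : ℝ^m → ℝ` is
Lipschitz with constant `1/γ`, then it is co-coercive with constant `γ`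
(Baillon–Haddad). -/
theorem statement3 {m : ℕ} (γ : ℝ) (hγ : 0 < γ) (φ : EuclideanSpace ℝ (Fin m) → ℝ)
    (hconv : ConvexOn ℝ Set.univ φ) (hdiff : Differentiable ℝ φ)
    (hlip : ∀ u v : EuclideanSpace ℝ (Fin m),
      ‖gradient φ u - gradient φ v‖ ≤ (1 / γ) * ‖u - v‖) :
    ∀ u v : EuclideanSpace ℝ (Fin m),
      ⟪u - v, gradient φ u - gradient φ v⟫_ℝ ≥ γ * ‖gradient φ u - gradient φ v‖ ^ 2 := by
  intro u v
  have hL : ((1 / γ).toNNReal : ℝ) = 1 / γ := Real.coe_toNNReal _ (by positivity)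
  have hlip' : LipschitzWith (1 / γ).toNNReal (∇ φ) :=
    lipschitzWith_iff_norm_sub_le.2 fun u v => by rw [hL]; exact hlip u v
  have hcoco := hconv.inv_mul_sq_norm_gradient_sub_le_inner hdiff hlip' u v
  rwa [hL, one_div, inv_inv] at hcoco
end

section
/- Suppose Φ is a monotone bifunction on X × X (Φ(x',x'') + Φ(x'',x') ≤ 0 for all x', x'' ∈ X), and the gradient map φ' of the penalty function is co-coercive with constant γ > 0. For each u let x(u) solve the penalized problem (3.5) and define g(u) with components g_i(u) = −φ'(h_i(x_i(u)) − u_i). Then the map G: u ↦ g(u) is co-coercive with constant γ: ⟨g(u') − g(u''), u' − u''⟩ ≥ γ‖g(u') − g(u'')‖² for all u', u''. -/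
open scoped InnerProductSpace RealInnerProductSpace

/-- if the bifunction `Φ` is monotone on `X × X` and the gradient map
`φ'` is co-coercive with constant `γ`, then the share-allocation map
`G : u ↦ (-φ'(hᵢ(xᵢ(u)) - uᵢ))ᵢ` is co-coercive with constant `γ`. -/
theorem statement10 {l M : ℕ} {n : Fin l → ℕ}
    (X : Set ((i : Fin l) → EuclideanSpace ℝ (Fin (n i))))
    (Φ : ((i : Fin l) → EuclideanSpace ℝ (Fin (n i))) →
      ((i : Fin l) → EuclideanSpace ℝ (Fin (n i))) → ℝ)
    (hmono : ∀ x' ∈ X, ∀ x'' ∈ X, Φ x' x'' + Φ x'' x' ≤ 0)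
    (φ : EuclideanSpace ℝ (Fin M) → ℝ)
    (hφconv : ConvexOn ℝ Set.univ φ) (hφdiff : Differentiable ℝ φ)
    (γ : ℝ) (hγ : 0 < γ)
    (hcoco : ∀ v' v'' : EuclideanSpace ℝ (Fin M),
      ⟪v' - v'', gradient φ v' - gradient φ v''⟫_ℝ ≥
        γ * ‖gradient φ v' - gradient φ v''‖ ^ 2)
    (h : (i : Fin l) → EuclideanSpace ℝ (Fin (n i)) → EuclideanSpace ℝ (Fin M))
    (τ : ℝ) (hτ : 0 < τ)
    (u' u'' : Fin l → EuclideanSpace ℝ (Fin M))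
    (x' x'' : (i : Fin l) → EuclideanSpace ℝ (Fin (n i)))
    (hx' : x' ∈ X) (hx'' : x'' ∈ X)
    (hsol' : ∀ x ∈ X,
      Φ x' x + τ * ∑ i, ⟪gradient φ (h i (x' i) - u' i), h i (x i) - h i (x' i)⟫_ℝ ≥ 0)
    (hsol'' : ∀ x ∈ X,
      Φ x'' x + τ * ∑ i, ⟪gradient φ (h i (x'' i) - u'' i), h i (x i) - h i (x'' i)⟫_ℝ ≥ 0) :
    ∑ i, ⟪(-(gradient φ (h i (x' i) - u' i))) - (-(gradient φ (h i (x'' i) - u'' i))),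
        u' i - u'' i⟫_ℝ ≥
      γ * ∑ i, ‖(-(gradient φ (h i (x' i) - u' i))) - (-(gradient φ (h i (x'' i) - u'' i)))‖ ^ 2 := by
  set g' : Fin l → EuclideanSpace ℝ (Fin M) := fun i => gradient φ (h i (x' i) - u' i) with hg'
  set g'' : Fin l → EuclideanSpace ℝ (Fin M) := fun i => gradient φ (h i (x'' i) - u'' i) with hg''
  have h1 := hsol' x'' hx''
  have h2 := hsol'' x' hx'
  have hm := hmono x' hx' x'' hx''
  -- S1 + S2 ≥ 0
  have hS : (∑ i, ⟪g' i, h i (x'' i) - h i (x' i)⟫_ℝ)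
      + (∑ i, ⟪g'' i, h i (x' i) - h i (x'' i)⟫_ℝ) ≥ 0 := by
    nlinarith [h1, h2, hm]
  -- rewrite as single sum: A ≥ 0 where A = ∑ ⟪g' i - g'' i, h i (x'' i) - h i (x' i)⟫
  have hA : (∑ i, ⟪g' i - g'' i, h i (x'' i) - h i (x' i)⟫_ℝ) ≥ 0 := by
    have : (∑ i, ⟪g' i - g'' i, h i (x'' i) - h i (x' i)⟫_ℝ)
        = (∑ i, ⟪g' i, h i (x'' i) - h i (x' i)⟫_ℝ)
          + (∑ i, ⟪g'' i, h i (x' i) - h i (x'' i)⟫_ℝ) := by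
      rw [← Finset.sum_add_distrib]
      refine Finset.sum_congr rfl fun i _ => ?_
      rw [inner_sub_left]
      have : ⟪g'' i, h i (x' i) - h i (x'' i)⟫_ℝ = - ⟪g'' i, h i (x'' i) - h i (x' i)⟫_ℝ := by
        rw [← inner_neg_right]; congr 1; abel
      rw [this]; ring
    linarith [this ▸ hS]
  -- sum of co-coercivity
  have hsum : (∑ i, ⟪(h i (x' i) - u' i) - (h i (x'' i) - u'' i), g' i - g'' i⟫_ℝ)
      ≥ γ * ∑ i, ‖g' i - g'' i‖ ^ 2 := by
    rw [Finset.mul_sum]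
    exact Finset.sum_le_sum fun i _ => hcoco (h i (x' i) - u' i) (h i (x'' i) - u'' i)
  -- split
  have hsplit : (∑ i, ⟪(h i (x' i) - u' i) - (h i (x'' i) - u'' i), g' i - g'' i⟫_ℝ)
      = - (∑ i, ⟪g' i - g'' i, h i (x'' i) - h i (x' i)⟫_ℝ)
        - (∑ i, ⟪u' i - u'' i, g' i - g'' i⟫_ℝ) := by
    rw [← Finset.sum_neg_distrib, ← Finset.sum_sub_distrib]
    refine Finset.sum_congr rfl fun i _ => ?_
    have e : (h i (x' i) - u' i) - (h i (x'' i) - u'' i)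
        = -(h i (x'' i) - h i (x' i)) - (u' i - u'' i) := by abel
    rw [e, inner_sub_left, inner_neg_left, real_inner_comm]
  have hgoalL : (∑ i, ⟪(-(g' i)) - (-(g'' i)), u' i - u'' i⟫_ℝ)
      = - (∑ i, ⟪u' i - u'' i, g' i - g'' i⟫_ℝ) := by
    rw [← Finset.sum_neg_distrib]
    refine Finset.sum_congr rfl fun i _ => ?_
    have e : (-(g' i)) - (-(g'' i)) = -(g' i - g'' i) := by abel
    rw [e, inner_neg_left, real_inner_comm]
  have hgoalR : (∑ i, ‖(-(g' i)) - (-(g'' i))‖ ^ 2) = ∑ i, ‖g' i - g'' i‖ ^ 2 := by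
    refine Finset.sum_congr rfl fun i _ => ?_
    have e : (-(g' i)) - (-(g'' i)) = -(g' i - g'' i) := by abel
    rw [e, norm_neg]
  rw [hgoalL, hgoalR]
  linarith [hsum, hA, hsplit]
end

section
/- Let U = {u ∈ U₀ : Σᵢ uᵢ = b} with u_i ∈ ℝ^m, assume each penalty P_i(x_i, u_i) = φ(h_i(x_i) − u_i) with φ(v) > 0 whenever v ≰ 0 and φ continuous, and suppose μ: X → ℝ is weakly coercive with respect to X. Then the function η(w) = max{μ(x), P(w)} on X × U is weakly coercive with respect to X × U, i.e., there is a number r such that the level set {w = (x,u) ∈ X × U : η(w) ≤ r} is nonempty and bounded. -/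
/-!
A convex lower semicontinuous `μ` with one nonempty bounded sublevel set has all sublevel sets
bounded: on the compact set where `X` meets a large sphere about a point `x₀` of that sublevel set,
`μ` stays above some `m > r₀`, and convexity along the segment from `x₀` then forces at least
linear growth outside the sphere. Take `r = max r₀ 0`; the level set of `η` is nonempty because
`P` vanishes at `x₀` with any feasible `u`. On it `x` is bounded, hence so is each `h i (x i)`,
while `φ (h i (x i) - u i) ≤ r` keeps every coordinate of `h i (x i) - u i` below a constant, as
`φ` blows up along any sequence with a coordinate tending to `∞`. So `u` is bounded below
coordinatewise, and `∑ i, u i = b` bounds it above.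
-/

open Filter Bornology Set Finset Metric

lemma LowerSemicontinuousOn.exists_gt_forall_le_of_isCompact {α β : Type*} [TopologicalSpace α]
    [LinearOrder β] [NoMaxOrder β] {f : α → β} {K : Set α} {c : β} (hK : IsCompact K)
    (hf : LowerSemicontinuousOn f K) (hc : ∀ y ∈ K, c < f y) : ∃ m, c < m ∧ ∀ y ∈ K, m ≤ f y := by
  rcases K.eq_empty_or_nonempty with rfl | hne
  · obtain ⟨m, hm⟩ := exists_gt c
    exact ⟨m, hm, by simp⟩
  · obtain ⟨a, ha, hmin⟩ := hf.exists_isMinOn hne hK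
    exact ⟨f a, hc a ha, hmin⟩

section SublevelSets

variable {E : Type*} [NormedAddCommGroup E] [NormedSpace ℝ E] {X : Set E} {μ : E → ℝ}

lemma ConvexOn.mul_sub_le_of_le_on_sphere (hμ : ConvexOn ℝ X μ) {x₀ x : E} (hx₀ : x₀ ∈ X)
    (hx : x ∈ X) {ρ m : ℝ} (hρ : 0 < ρ) (hm : ∀ y ∈ X, ‖y - x₀‖ = ρ → m ≤ μ y)
    (hρx : ρ ≤ ‖x - x₀‖) : (m - μ x₀) * ‖x - x₀‖ ≤ ρ * (μ x - μ x₀) := by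
  set d := ‖x - x₀‖
  have hd : 0 < d := hρ.trans_le hρx
  set t := ρ / d
  have ht0 : 0 ≤ t := by positivity
  have ht1 : t ≤ 1 := div_le_one_of_le₀ hρx hd.le
  have hyX : (1 - t) • x₀ + t • x ∈ X := hμ.1 hx₀ hx (by linarith) ht0 (by ring)
  have hyρ : ‖(1 - t) • x₀ + t • x - x₀‖ = ρ := by
    rw [show (1 - t) • x₀ + t • x - x₀ = t • (x - x₀) by module, norm_smul,
      Real.norm_of_nonneg ht0, div_mul_cancel₀ _ hd.ne']
  have hconv : μ ((1 - t) • x₀ + t • x) ≤ (1 - t) * μ x₀ + t * μ x :=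
    hμ.2 hx₀ hx (by linarith) ht0 (by ring)
  have hmt : m - μ x₀ ≤ t * (μ x - μ x₀) := by linarith [hm _ hyX hyρ]
  calc (m - μ x₀) * d ≤ t * (μ x - μ x₀) * d := by gcongr
    _ = ρ * (μ x - μ x₀) := by rw [mul_right_comm, div_mul_cancel₀ _ hd.ne']

theorem ConvexOn.isBounded_sublevel_of_isBounded_sublevel [ProperSpace E]
    (hμ : ConvexOn ℝ X μ) (hX : IsClosed X) (hlsc : LowerSemicontinuousOn μ X) {r₀ : ℝ}
    (hne : {x ∈ X | μ x ≤ r₀}.Nonempty) (hbd : IsBounded {x ∈ X | μ x ≤ r₀}) (r : ℝ) :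
    IsBounded {x ∈ X | μ x ≤ r} := by
  obtain ⟨x₀, hx₀X, hx₀r⟩ := hne
  obtain ⟨R, hR⟩ := hbd.subset_closedBall x₀
  set ρ := max R 0 + 1
  have hρ : 0 < ρ := by positivity
  have hK : IsCompact (X ∩ sphere x₀ ρ) := (isCompact_sphere x₀ ρ).inter_left hX
  have hgt : ∀ y ∈ X ∩ sphere x₀ ρ, r₀ < μ y := by
    rintro y ⟨hyX, hyρ⟩
    by_contra! hle
    have hyR := hR ⟨hyX, hle⟩
    rw [mem_closedBall] at hyR
    rw [mem_sphere] at hyρ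
    linarith [le_max_left R 0]
  obtain ⟨m, hm, hmK⟩ := (hlsc.mono inter_subset_left).exists_gt_forall_le_of_isCompact hK hgt
  refine (isBounded_closedBall (x := x₀) (r := max ρ (ρ * (r - μ x₀) / (m - μ x₀)))).subset ?_
  rintro x ⟨hxX, hxr⟩
  rw [mem_closedBall, dist_eq_norm]
  rcases le_or_gt ‖x - x₀‖ ρ with hxρ | hxρ
  · exact hxρ.trans (le_max_left _ _)
  · have hgrowth := hμ.mul_sub_le_of_le_on_sphere hx₀X hxX hρ
      (fun y hy hyρ => hmK y ⟨hy, by rwa [mem_sphere, dist_eq_norm]⟩) hxρ.le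
    refine le_max_of_le_right ?_
    rw [le_div_iff₀ (by linarith)]
    nlinarith

end SublevelSets

lemma bddAbove_image_setOf_le_of_tendsto_atTop {α : Type*} {f g : α → ℝ}
    (hfg : ∀ v : ℕ → α, Tendsto (fun k => g (v k)) atTop atTop →
      Tendsto (fun k => f (v k)) atTop atTop) (c : ℝ) :
    BddAbove (g '' {a | f a ≤ c}) := by
  refine bddAbove_def.2 ?_
  simp_rw [forall_mem_image]
  by_contra! hunbdd
  choose v hfv hgv using fun k : ℕ => hunbdd k
  have hf := hfg v (tendsto_atTop_mono (fun k => (hgv k).le) tendsto_natCast_atTop_atTop)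
  obtain ⟨k, hk⟩ := (hf.eventually_gt_atTop c).exists
  exact (hfv k).not_gt hk

lemma exists_le_apply_of_le_of_tendsto_atTop {E κ : Type*} [PseudoMetricSpace E] [ProperSpace E]
    [Fintype κ] {φ : EuclideanSpace ℝ κ → ℝ}
    (hφ : ∀ (v : ℕ → EuclideanSpace ℝ κ) (t : κ),
      Tendsto (fun k => v k t) atTop atTop → Tendsto (fun k => φ (v k)) atTop atTop)
    {g : E → EuclideanSpace ℝ κ} (hg : Continuous g) {S : Set E} (hS : IsBounded S)
    (c : ℝ) (t : κ) : ∃ a, ∀ x ∈ S, ∀ u, φ (g x - u) ≤ c → a ≤ u t := by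
  obtain ⟨C, hC⟩ := bddAbove_image_setOf_le_of_tendsto_atTop (f := φ) (g := fun v => v t)
    (fun v => hφ v t) c
  obtain ⟨m, hm⟩ := (hS.isCompact_closure.bddBelow_image (f := fun x => g x t)
    (by fun_prop)).mono (image_mono subset_closure)
  refine ⟨m - C, fun x hx u hu => ?_⟩
  have hgap : g x t - u t ≤ C := hC ⟨g x - u, hu, rfl⟩
  have hgx : m ≤ g x t := hm (Set.mem_image_of_mem _ hx)
  linarith

lemma isBounded_setOf_sum_eq_of_le_apply {ι κ : Type*} [Fintype ι] [Fintype κ]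
    (a : ι → κ → ℝ) (b : EuclideanSpace ℝ κ) :
    IsBounded {u : ι → EuclideanSpace ℝ κ | ∑ i, u i = b ∧ ∀ i t, a i t ≤ u i t} := by
  classical
  set e := EuclideanSpace.equiv κ ℝ
  refine (IsBounded.pi fun i => e.symm.lipschitz.isBounded_image
    (isBounded_Icc (a i) (fun t => b t - ∑ i' ∈ univ.erase i, a i' t))).subset ?_
  rintro u ⟨hsum, ha⟩ i -
  dsimp only
  rw [e.image_symm_eq_preimage]
  refine ⟨fun t => ha i t, fun t => ?_⟩
  have hbt : ∑ i', u i' t = b t := by rw [← hsum]; simp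
  have hsplit := Finset.add_sum_erase univ (fun i' => u i' t) (mem_univ i)
  have hrest := Finset.sum_le_sum (s := univ.erase i) fun i' _ => ha i' t
  show u i t ≤ b t - ∑ i' ∈ univ.erase i, a i' t
  linarith

theorem statement13_general {l M : ℕ} {n : Fin l → ℕ}
    (X : Set ((i : Fin l) → EuclideanSpace ℝ (Fin (n i))))
    (hXcl : IsClosed X)
    (U₀ : Set (Fin l → EuclideanSpace ℝ (Fin M))) (b : EuclideanSpace ℝ (Fin M))
    (μ : ((i : Fin l) → EuclideanSpace ℝ (Fin (n i))) → ℝ)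
    (hμconv : ConvexOn ℝ X μ) (hμlsc : LowerSemicontinuousOn μ X)
    (r₀ : ℝ) (hwc : ({x ∈ X | μ x ≤ r₀}).Nonempty ∧ IsBounded {x ∈ X | μ x ≤ r₀})
    (φ : EuclideanSpace ℝ (Fin M) → ℝ)
    (hφ0 : ∀ v, 0 ≤ φ v)
    (hφiff : ∀ v : EuclideanSpace ℝ (Fin M), φ v = 0 ↔ ∀ j, v j ≤ 0)
    (hφ_inf : ∀ (v : ℕ → EuclideanSpace ℝ (Fin M)) (t : Fin M),
      Tendsto (fun k => v k t) atTop atTop → Tendsto (fun k => φ (v k)) atTop atTop)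
    (h : (i : Fin l) → EuclideanSpace ℝ (Fin (n i)) → EuclideanSpace ℝ (Fin M))
    (hhc : ∀ i, Continuous (h i))
    (hfeas : ∀ x ∈ X, ∃ u ∈ U₀, (∑ i, u i = b) ∧ ∀ i j, h i (x i) j ≤ u i j) :
    ∃ r : ℝ,
      ({w : ((i : Fin l) → EuclideanSpace ℝ (Fin (n i))) ×
            (Fin l → EuclideanSpace ℝ (Fin M)) |
          w.1 ∈ X ∧ w.2 ∈ U₀ ∧ (∑ i, w.2 i = b) ∧
            max (μ w.1) (∑ i, φ (h i (w.1 i) - w.2 i)) ≤ r}).Nonempty ∧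
      IsBounded
        {w : ((i : Fin l) → EuclideanSpace ℝ (Fin (n i))) ×
            (Fin l → EuclideanSpace ℝ (Fin M)) |
          w.1 ∈ X ∧ w.2 ∈ U₀ ∧ (∑ i, w.2 i = b) ∧
            max (μ w.1) (∑ i, φ (h i (w.1 i) - w.2 i)) ≤ r} := by
  obtain ⟨⟨x₀, hx₀X, hx₀r⟩, hbd⟩ := hwc
  set r := max r₀ 0
  have hS : IsBounded {x ∈ X | μ x ≤ r} :=
    hμconv.isBounded_sublevel_of_isBounded_sublevel hXcl hμlsc ⟨x₀, hx₀X, hx₀r⟩ hbd r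
  refine ⟨r, ?_, ?_⟩
  · obtain ⟨u₀, hu₀, hsum, hle⟩ := hfeas x₀ hx₀X
    have hP : ∀ i, φ (h i (x₀ i) - u₀ i) = 0 := fun i =>
      (hφiff _).2 fun j => by simpa using hle i j
    refine ⟨(x₀, u₀), hx₀X, hu₀, hsum, max_le (hx₀r.trans (le_max_left _ _)) ?_⟩
    rw [Finset.sum_eq_zero fun i _ => hP i]
    exact le_max_right _ _
  · choose a ha using fun i t =>
      exists_le_apply_of_le_of_tendsto_atTop hφ_inf ((hhc i).comp (continuous_apply i)) hS r t
    refine (hS.prod (isBounded_setOf_sum_eq_of_le_apply a b)).subset ?_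
    rintro ⟨x, u⟩ ⟨hx, -, hsum, hη⟩
    change max (μ x) (∑ i, φ (h i (x i) - u i)) ≤ r at hη
    have hxr : x ∈ {x ∈ X | μ x ≤ r} := ⟨hx, le_of_max_le_left hη⟩
    have hP : ∀ i, φ (h i (x i) - u i) ≤ r := fun i =>
      (single_le_sum (f := fun i => φ (h i (x i) - u i)) (fun i _ => hφ0 _) (mem_univ i)).trans (le_of_max_le_right hη)
    exact ⟨hxr, hsum, fun i t => ha i t x hxr (u i) (hP i)⟩

/-- `η(w) = max(μ(x), P(w))` is weakly coercive with respect to `X × U`: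
some level set of `η` in `X × U` is nonempty and bounded. -/
theorem statement13 {l M : ℕ} {n : Fin l → ℕ}
    (X : Set ((i : Fin l) → EuclideanSpace ℝ (Fin (n i))))
    (hXc : Convex ℝ X) (hXcl : IsClosed X)
    (U₀ : Set (Fin l → EuclideanSpace ℝ (Fin M))) (b : EuclideanSpace ℝ (Fin M))
    (μ : ((i : Fin l) → EuclideanSpace ℝ (Fin (n i))) → ℝ)
    (hμconv : ConvexOn ℝ X μ) (hμlsc : LowerSemicontinuousOn μ X)
    (r₀ : ℝ) (hwc : ({x ∈ X | μ x ≤ r₀}).Nonempty ∧ IsBounded {x ∈ X | μ x ≤ r₀})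
    (φ : EuclideanSpace ℝ (Fin M) → ℝ) (hφc : Continuous φ)
    (hφ0 : ∀ v, 0 ≤ φ v)
    (hφiff : ∀ v : EuclideanSpace ℝ (Fin M), φ v = 0 ↔ ∀ j, v j ≤ 0)
    (hφ_inf : ∀ (v : ℕ → EuclideanSpace ℝ (Fin M)) (t : Fin M),
      Tendsto (fun k => v k t) atTop atTop → Tendsto (fun k => φ (v k)) atTop atTop)
    (h : (i : Fin l) → EuclideanSpace ℝ (Fin (n i)) → EuclideanSpace ℝ (Fin M))
    (hhc : ∀ i, Continuous (h i))
    (hfeas : ∀ x ∈ X, ∃ u ∈ U₀, (∑ i, u i = b) ∧ ∀ i j, h i (x i) j ≤ u i j) :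
    ∃ r : ℝ,
      ({w : ((i : Fin l) → EuclideanSpace ℝ (Fin (n i))) ×
            (Fin l → EuclideanSpace ℝ (Fin M)) |
          w.1 ∈ X ∧ w.2 ∈ U₀ ∧ (∑ i, w.2 i = b) ∧
            max (μ w.1) (∑ i, φ (h i (w.1 i) - w.2 i)) ≤ r}).Nonempty ∧
      IsBounded
        {w : ((i : Fin l) → EuclideanSpace ℝ (Fin (n i))) ×
            (Fin l → EuclideanSpace ℝ (Fin M)) |
          w.1 ∈ X ∧ w.2 ∈ U₀ ∧ (∑ i, w.2 i = b) ∧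
            max (μ w.1) (∑ i, φ (h i (w.1 i) - w.2 i)) ≤ r} :=
  statement13_general X hXcl U₀ b μ hμconv hμlsc r₀ hwc φ hφ0 hφiff hφ_inf h hhc hfeas
end

section
/- Let {τ_k} ↗ +∞ and let w^k = (x^k, u^k) solve the penalized problem (3.1) for τ = τ_k with {w^k} bounded. Then any limit point x̄ of {x^k} is a normalized equilibrium point of the original problem: x̄ ∈ D and Φ(x̄, x) ≥ 0 for all x ∈ D. -/
/-!
Testing the penalized inequality at a feasible point `(x, u)`, whose penalty is zero, gives
`τ_k P(w^k) ≤ Φ(x^k, x)`. Along the subsequence the right-hand side converges, so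
`P(w^k) = O(1/τ_k) → 0` and the limit point has zero penalty, i.e. it is feasible; and
`Φ(x^k, x) ≥ τ_k P(w^k) ≥ 0` passes to the limit.
-/

open Filter Bornology Topology

section PenaltyLimit

variable {ι α β : Type*} {L : Filter ι}
  {Φ : α → α → ℝ} {P : α × β → ℝ} {S : Set (α × β)} {τ : ι → ℝ} {w : ι → α × β}
  {wbar z : α × β}

theorem mul_penalty_le_of_penalty_eq_zero
    (hsol : ∀ k, ∀ z ∈ S, 0 ≤ Φ (w k).1 z.1 + τ k * (P z - P (w k)))
    (hz : z ∈ S) (hPz : P z = 0) (k : ι) :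
    τ k * P (w k) ≤ Φ (w k).1 z.1 := by
  have := hsol k z hz
  rw [hPz] at this
  linarith

variable [TopologicalSpace α] [TopologicalSpace β]

theorem penalty_eq_zero_of_tendsto [L.NeBot] (hP : Continuous P) (hP0 : ∀ q, 0 ≤ P q)
    (hΦ : ∀ y, Continuous (Φ · y)) (hτ : Tendsto τ L atTop) (hw : Tendsto w L (𝓝 wbar))
    (hsol : ∀ k, ∀ z ∈ S, 0 ≤ Φ (w k).1 z.1 + τ k * (P z - P (w k)))
    (hS : ∃ z ∈ S, P z = 0) :
    P wbar = 0 := by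
  obtain ⟨z, hz, hPz⟩ := hS
  have hbound : ∀ᶠ k in L, P (w k) ≤ Φ (w k).1 z.1 / τ k := by
    filter_upwards [hτ.eventually_gt_atTop 0] with k hτk
    rw [le_div_iff₀ hτk, mul_comm]
    exact mul_penalty_le_of_penalty_eq_zero hsol hz hPz k
  have hupper : Tendsto (fun k => Φ (w k).1 z.1 / τ k) L (𝓝 0) :=
    ((hΦ z.1).tendsto wbar.1 |>.comp hw.fst_nhds).div_atTop hτ
  exact tendsto_nhds_unique ((hP.tendsto wbar).comp hw)
    (squeeze_zero' (.of_forall fun k => hP0 _) hbound hupper)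

theorem le_of_tendsto_of_penalty_eq_zero [L.NeBot] (hP0 : ∀ q, 0 ≤ P q)
    (hΦ : Continuous (Φ · z.1)) (hτ : ∀ᶠ k in L, 0 ≤ τ k) (hw : Tendsto w L (𝓝 wbar))
    (hsol : ∀ k, ∀ z ∈ S, 0 ≤ Φ (w k).1 z.1 + τ k * (P z - P (w k)))
    (hz : z ∈ S) (hPz : P z = 0) :
    0 ≤ Φ wbar.1 z.1 := by
  refine ge_of_tendsto ((hΦ.tendsto wbar.1).comp hw.fst_nhds) ?_
  filter_upwards [hτ] with k hτk
  exact (mul_nonneg hτk (hP0 _)).trans (mul_penalty_le_of_penalty_eq_zero hsol hz hPz k)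

end PenaltyLimit

section EuclideanPenalty

variable {ι : Type*} [Fintype ι] {M : ℕ}

theorem sum_penalty_eq_zero_iff {φ : EuclideanSpace ℝ (Fin M) → ℝ} (hφ0 : ∀ v, 0 ≤ φ v)
    (hφiff : ∀ v : EuclideanSpace ℝ (Fin M), φ v = 0 ↔ ∀ j, v j ≤ 0)
    (y u : ι → EuclideanSpace ℝ (Fin M)) :
    ∑ i, φ (y i - u i) = 0 ↔ ∀ i j, y i j ≤ u i j := by
  simp only [Finset.sum_eq_zero_iff_of_nonneg (fun i _ => hφ0 _), Finset.mem_univ,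
    true_implies, hφiff, PiLp.sub_apply, sub_nonpos]

theorem sum_apply_le_sum_apply {y u : ι → EuclideanSpace ℝ (Fin M)}
    (hyu : ∀ i j, y i j ≤ u i j) (j : Fin M) :
    (∑ i, y i) j ≤ (∑ i, u i) j := by
  simp only [WithLp.ofLp_sum, Finset.sum_apply]
  exact Finset.sum_le_sum fun i _ => hyu i j

end EuclideanPenalty

theorem statement15_general {l M : ℕ} {n : Fin l → ℕ}
    (X : Set ((i : Fin l) → EuclideanSpace ℝ (Fin (n i)))) (hXcl : IsClosed X)
    (U : Set (Fin l → EuclideanSpace ℝ (Fin M))) (b : EuclideanSpace ℝ (Fin M))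
    (hU : ∀ u ∈ U, ∑ i, u i = b)
    (Φ : ((i : Fin l) → EuclideanSpace ℝ (Fin (n i))) →
      ((i : Fin l) → EuclideanSpace ℝ (Fin (n i))) → ℝ)
    (hΦc : Continuous fun p : ((i : Fin l) → EuclideanSpace ℝ (Fin (n i))) ×
      ((i : Fin l) → EuclideanSpace ℝ (Fin (n i))) => Φ p.1 p.2)
    (φ : EuclideanSpace ℝ (Fin M) → ℝ) (hφc : Continuous φ) (hφ0 : ∀ v, 0 ≤ φ v)
    (hφiff : ∀ v : EuclideanSpace ℝ (Fin M), φ v = 0 ↔ ∀ j, v j ≤ 0)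
    (h : (i : Fin l) → EuclideanSpace ℝ (Fin (n i)) → EuclideanSpace ℝ (Fin M))
    (hhc : ∀ i, Continuous (h i))
    (hD : ({x ∈ X | ∀ j, (∑ i, h i (x i)) j ≤ b j}).Nonempty)
    (hfeas : ∀ x ∈ {x ∈ X | ∀ j, (∑ i, h i (x i)) j ≤ b j},
      ∃ u ∈ U, ∀ i j, h i (x i) j ≤ u i j)
    (τ : ℕ → ℝ)
    (hτ_inf : Tendsto τ atTop atTop)
    (w : ℕ → ((i : Fin l) → EuclideanSpace ℝ (Fin (n i))) ×
      (Fin l → EuclideanSpace ℝ (Fin M)))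
    (hwX : ∀ k, (w k).1 ∈ X) (hwU : ∀ k, (w k).2 ∈ U)
    (hsol : ∀ k, ∀ x ∈ X, ∀ u ∈ U,
      Φ (w k).1 x + τ k * ((∑ i, φ (h i (x i) - u i))
        - ∑ i, φ (h i ((w k).1 i) - (w k).2 i)) ≥ 0)
    (wbar : ((i : Fin l) → EuclideanSpace ℝ (Fin (n i))) ×
      (Fin l → EuclideanSpace ℝ (Fin M)))
    (ψ : ℕ → ℕ) (hψ : StrictMono ψ)
    (hlim : Tendsto (fun s => w (ψ s)) atTop (nhds wbar)) :
    wbar.1 ∈ {x ∈ X | ∀ j, (∑ i, h i (x i)) j ≤ b j} ∧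
      ∀ x ∈ {x ∈ X | ∀ j, (∑ i, h i (x i)) j ≤ b j}, Φ wbar.1 x ≥ 0 := by
  set P : ((i : Fin l) → EuclideanSpace ℝ (Fin (n i))) × (Fin l → EuclideanSpace ℝ (Fin M)) →
    ℝ := fun q => ∑ i, φ (h i (q.1 i) - q.2 i)
  have hPc : Continuous P := by fun_prop
  have hP0 : ∀ q, 0 ≤ P q := fun q => Finset.sum_nonneg fun i _ => hφ0 _
  have hΦ : ∀ y, Continuous (Φ · y) := fun y => hΦc.comp (continuous_id.prodMk continuous_const)
  have hsolψ : ∀ s, ∀ z ∈ X ×ˢ U, 0 ≤ Φ (w (ψ s)).1 z.1 + τ (ψ s) * (P z - P (w (ψ s))) :=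
    fun s z hz => hsol (ψ s) z.1 hz.1 z.2 hz.2
  have hτψ : Tendsto (fun s => τ (ψ s)) atTop atTop := hτ_inf.comp hψ.tendsto_atTop
  have hfeasP : ∀ x ∈ {x ∈ X | ∀ j, (∑ i, h i (x i)) j ≤ b j},
      ∃ u ∈ U, P (x, u) = 0 := fun x hx => by
    obtain ⟨u, hu, hxu⟩ := hfeas x hx
    exact ⟨u, hu, (sum_penalty_eq_zero_iff hφ0 hφiff _ _).2 hxu⟩
  obtain ⟨x₀, hx₀⟩ := hD
  obtain ⟨u₀, hu₀, hPz₀⟩ := hfeasP x₀ hx₀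
  have hPbar : P wbar = 0 :=
    penalty_eq_zero_of_tendsto hPc hP0 hΦ hτψ hlim hsolψ ⟨(x₀, u₀), ⟨hx₀.1, hu₀⟩, hPz₀⟩
  have hXbar : wbar.1 ∈ X := hXcl.mem_of_tendsto hlim.fst_nhds (.of_forall fun s => hwX _)
  have hsum_closed : IsClosed {u : Fin l → EuclideanSpace ℝ (Fin M) | ∑ i, u i = b} :=
    isClosed_eq (by fun_prop) continuous_const
  have hUbar : ∑ i, wbar.2 i = b :=
    hsum_closed.mem_of_tendsto hlim.snd_nhds (.of_forall fun s => hU _ (hwU _))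
  refine ⟨⟨hXbar, fun j => hUbar ▸ sum_apply_le_sum_apply
    ((sum_penalty_eq_zero_iff hφ0 hφiff _ _).1 hPbar) j⟩, fun x hx => ?_⟩
  obtain ⟨u, hu, hPz⟩ := hfeasP x hx
  exact le_of_tendsto_of_penalty_eq_zero (z := (x, u)) hP0 (hΦ x)
    (hτψ.eventually_ge_atTop 0) hlim hsolψ ⟨hx.1, hu⟩ hPz

/-- with `τ_k ↗ +∞` and `w^k = (x^k,u^k)` bounded solutions of the
penalized problem (3.1), any limit point `x̄` of `{x^k}` is a normalized equilibrium
point: `x̄ ∈ D` and `Φ(x̄,x) ≥ 0` for all `x ∈ D`. -/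
theorem statement15 {l M : ℕ} {n : Fin l → ℕ}
    (X : Set ((i : Fin l) → EuclideanSpace ℝ (Fin (n i)))) (hXcl : IsClosed X)
    (U : Set (Fin l → EuclideanSpace ℝ (Fin M))) (b : EuclideanSpace ℝ (Fin M))
    (hU : ∀ u ∈ U, ∑ i, u i = b)
    (Φ : ((i : Fin l) → EuclideanSpace ℝ (Fin (n i))) →
      ((i : Fin l) → EuclideanSpace ℝ (Fin (n i))) → ℝ)
    (hΦc : Continuous fun p : ((i : Fin l) → EuclideanSpace ℝ (Fin (n i))) ×
      ((i : Fin l) → EuclideanSpace ℝ (Fin (n i))) => Φ p.1 p.2)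
    (hΦ0 : ∀ x, Φ x x = 0)
    (φ : EuclideanSpace ℝ (Fin M) → ℝ) (hφc : Continuous φ) (hφ0 : ∀ v, 0 ≤ φ v)
    (hφiff : ∀ v : EuclideanSpace ℝ (Fin M), φ v = 0 ↔ ∀ j, v j ≤ 0)
    (h : (i : Fin l) → EuclideanSpace ℝ (Fin (n i)) → EuclideanSpace ℝ (Fin M))
    (hhc : ∀ i, Continuous (h i))
    (hD : ({x ∈ X | ∀ j, (∑ i, h i (x i)) j ≤ b j}).Nonempty)
    (hfeas : ∀ x ∈ {x ∈ X | ∀ j, (∑ i, h i (x i)) j ≤ b j},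
      ∃ u ∈ U, ∀ i j, h i (x i) j ≤ u i j)
    (τ : ℕ → ℝ) (hτpos : ∀ k, 0 < τ k) (hτmono : Monotone τ)
    (hτ_inf : Tendsto τ atTop atTop)
    (w : ℕ → ((i : Fin l) → EuclideanSpace ℝ (Fin (n i))) ×
      (Fin l → EuclideanSpace ℝ (Fin M)))
    (hwX : ∀ k, (w k).1 ∈ X) (hwU : ∀ k, (w k).2 ∈ U)
    (hsol : ∀ k, ∀ x ∈ X, ∀ u ∈ U,
      Φ (w k).1 x + τ k * ((∑ i, φ (h i (x i) - u i))
        - ∑ i, φ (h i ((w k).1 i) - (w k).2 i)) ≥ 0)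
    (hbdd : IsBounded (Set.range w))
    (wbar : ((i : Fin l) → EuclideanSpace ℝ (Fin (n i))) ×
      (Fin l → EuclideanSpace ℝ (Fin M)))
    (ψ : ℕ → ℕ) (hψ : StrictMono ψ)
    (hlim : Tendsto (fun s => w (ψ s)) atTop (nhds wbar)) :
    wbar.1 ∈ {x ∈ X | ∀ j, (∑ i, h i (x i)) j ≤ b j} ∧
      ∀ x ∈ {x ∈ X | ∀ j, (∑ i, h i (x i)) j ≤ b j}, Φ wbar.1 x ≥ 0 :=
  statement15_general X hXcl U b hU Φ hΦc φ hφc hφ0 hφiff h hhc hD hfeas τ hτ_inf w hwX hwU hsol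
    wbar ψ hψ hlim
end

section
/- Suppose the pair (x(u), v(u)) ∈ X × ℝ_+^{ml} solves the primal–dual system (2.4)–(2.5) for a partition u, and u* solves the master variational inequality: ⟨−v(u*), u − u*⟩ ≥ 0 for all u ∈ Ũ = {u : Σᵢ uᵢ = b}. Then x(u*) is a normalized equilibrium point of the original game: x(u*) ∈ D and Φ(x(u*), y) ≥ 0 for all y ∈ D. -/
/-!
Complementary slackness in (2.5) gives `h i (x i) ≤ u* i` with `⟪v i, u* i⟫ = ⟪v i, h i (x i)⟫`,
so `x(u*)` is feasible. For a feasible `y`, the partition `u i = h i (y i)` (plus the slack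
`b - ∑ h i (y i)` given to one player) is admissible in the master inequality, which bounds
`∑ ⟪v i, h i (y i)⟫` by `∑ ⟪v i, u* i⟫ = ∑ ⟪v i, h i (x i)⟫`. Summing (2.4) over the players
then gives `Φ(x(u*), y) ≥ 0`.
-/

open scoped InnerProductSpace RealInnerProductSpace

namespace EuclideanSpace

lemma sum_apply {ι κ : Type*} (s : Finset ι) (g : ι → EuclideanSpace ℝ κ) (j : κ) :
    (∑ i ∈ s, g i) j = ∑ i ∈ s, g i j := by
  rw [WithLp.ofLp_sum, Finset.sum_apply]

variable {κ : Type*} [Fintype κ]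

lemma inner_nonneg_of_nonneg {a c : EuclideanSpace ℝ κ} (ha : ∀ j, 0 ≤ a j)
    (hc : ∀ j, 0 ≤ c j) : 0 ≤ ⟪a, c⟫ := by
  rw [PiLp.inner_apply]
  exact Finset.sum_nonneg fun j _ => mul_nonneg (hc j) (ha j)

def SolvesOrthantVI (a w : EuclideanSpace ℝ κ) : Prop :=
  (∀ j, 0 ≤ w j) ∧ ∀ v : EuclideanSpace ℝ κ, (∀ j, 0 ≤ v j) → 0 ≤ ⟪a, v - w⟫

lemma SolvesOrthantVI.nonneg [DecidableEq κ] {a w : EuclideanSpace ℝ κ}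
    (hw : SolvesOrthantVI a w) (j : κ) : 0 ≤ a j := by
  have hv : ∀ k, 0 ≤ (w + EuclideanSpace.single j (1 : ℝ)) k := fun k => by
    rcases eq_or_ne k j with rfl | hk
    · simpa using add_nonneg (hw.1 k) zero_le_one
    · simpa [hk] using hw.1 k
  simpa [inner_single_right] using hw.2 _ hv

lemma SolvesOrthantVI.inner_eq_zero {a w : EuclideanSpace ℝ κ} (hw : SolvesOrthantVI a w) :
    ⟪a, w⟫ = 0 := by
  have h₀ := hw.2 0 fun _ => le_rfl
  have h₂ := hw.2 (2 • w) fun j => by simpa using mul_nonneg zero_le_two (hw.1 j)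
  rw [zero_sub, inner_neg_right] at h₀
  rw [two_nsmul, add_sub_cancel_right] at h₂
  linarith

end EuclideanSpace

open EuclideanSpace

section MasterVI

variable {ι κ : Type*} [Fintype ι] [Fintype κ]

lemma sum_inner_le_of_master_vi [DecidableEq ι] {v us z : ι → EuclideanSpace ℝ κ}
    {b : EuclideanSpace ℝ κ} (hv : ∀ i j, 0 ≤ v i j)
    (hVI : ∀ u : ι → EuclideanSpace ℝ κ, ∑ i, u i = b → 0 ≤ ∑ i, ⟪-(v i), u i - us i⟫)
    (hz : ∀ j, (∑ i, z i) j ≤ b j) :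
    ∑ i, ⟪v i, z i⟫ ≤ ∑ i, ⟪v i, us i⟫ := by
  cases isEmpty_or_nonempty ι
  · simp
  obtain ⟨i₀⟩ := ‹Nonempty ι›
  -- the slack `b - ∑ z` is handed to player `i₀`, making `z` an admissible partition
  set slack := b - ∑ i, z i
  have hslack : ∀ j, 0 ≤ slack j := fun j => by
    simpa [slack] using hz j
  let u : ι → EuclideanSpace ℝ κ := z + Pi.single i₀ slack
  have hu : ∑ i, u i = b := by
    simp [u, Finset.sum_add_distrib, slack]
  have hpairing : ∑ i, ⟪v i, u i⟫ = ∑ i, ⟪v i, z i⟫ + ⟪v i₀, slack⟫ := by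
    simp only [u, Pi.add_apply, inner_add_right, Finset.sum_add_distrib, add_right_inj]
    exact (Fintype.sum_eq_single i₀ fun i hi => by simp [hi]).trans (by simp)
  have hVIu := hVI u hu
  simp only [inner_neg_left, inner_sub_right, Finset.sum_sub_distrib,
    Finset.sum_neg_distrib] at hVIu
  linarith [inner_nonneg_of_nonneg (hv i₀) hslack]

end MasterVI

/-- if `(x(u*), v(u*))` solves the primal–dual system (2.4)–(2.5) and
`u*` solves the master variational inequality (2.6), then `x(u*)` is a normalized
equilibrium point of the original game. -/
theorem statement16 {l M : ℕ} {n : Fin l → ℕ}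
    (X : (i : Fin l) → Set (EuclideanSpace ℝ (Fin (n i))))
    (f : Fin l → ((i : Fin l) → EuclideanSpace ℝ (Fin (n i))) → ℝ)
    (h : (i : Fin l) → EuclideanSpace ℝ (Fin (n i)) → EuclideanSpace ℝ (Fin M))
    (b : EuclideanSpace ℝ (Fin M))
    (us : Fin l → EuclideanSpace ℝ (Fin M)) (hus : ∑ i, us i = b)
    (xs : (i : Fin l) → EuclideanSpace ℝ (Fin (n i))) (hxs : ∀ i, xs i ∈ X i)
    (vs : Fin l → EuclideanSpace ℝ (Fin M)) (hvs : ∀ i j, 0 ≤ vs i j)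
    -- system (2.4)
    (h24 : ∀ i, ∀ yi ∈ X i,
      f i xs - f i (Function.update xs i yi) + ⟪vs i, h i yi - h i (xs i)⟫_ℝ ≥ 0)
    -- system (2.5)
    (h25 : ∀ i, ∀ vi : EuclideanSpace ℝ (Fin M), (∀ j, 0 ≤ vi j) →
      ⟪us i - h i (xs i), vi - vs i⟫_ℝ ≥ 0)
    -- master variational inequality (2.6)
    (hVI : ∀ u : Fin l → EuclideanSpace ℝ (Fin M), (∑ i, u i = b) →
      ∑ i, ⟪-(vs i), u i - us i⟫_ℝ ≥ 0) :
    ((∀ i, xs i ∈ X i) ∧ ∀ j, (∑ i, h i (xs i)) j ≤ b j) ∧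
      ∀ y : (i : Fin l) → EuclideanSpace ℝ (Fin (n i)),
        ((∀ i, y i ∈ X i) ∧ ∀ j, (∑ i, h i (y i)) j ≤ b j) →
        (0:ℝ) ≤ ∑ i, (f i xs - f i (Function.update xs i (y i))) := by
  have hcs : ∀ i, SolvesOrthantVI (us i - h i (xs i)) (vs i) := fun i => ⟨hvs i, h25 i⟩
  have hle : ∀ i j, h i (xs i) j ≤ us i j := fun i j => by
    simpa using (hcs i).nonneg j
  have hcompl : ∀ i, ⟪vs i, us i⟫ = ⟪vs i, h i (xs i)⟫ := fun i => by
    have := (hcs i).inner_eq_zero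
    rw [real_inner_comm, inner_sub_right] at this
    linarith
  refine ⟨⟨hxs, fun j => ?_⟩, fun y ⟨hyX, hyb⟩ => ?_⟩
  · rw [EuclideanSpace.sum_apply, ← hus, EuclideanSpace.sum_apply]
    exact Finset.sum_le_sum fun i _ => hle i j
  · have hmaster := sum_inner_le_of_master_vi hvs hVI hyb
    have hplayer : ∀ i, ⟪vs i, h i (xs i)⟫ - ⟪vs i, h i (y i)⟫ ≤
        f i xs - f i (Function.update xs i (y i)) := fun i => by
      have := h24 i (y i) (hyX i)
      rw [inner_sub_right] at this
      linarith
    calc (0 : ℝ) ≤ ∑ i, (⟪vs i, h i (xs i)⟫ - ⟪vs i, h i (y i)⟫) := by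
          simp only [Finset.sum_sub_distrib, ← hcompl]
          linarith
      _ ≤ _ := Finset.sum_le_sum fun i _ => hplayer i
end
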